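/- arXiv:1912.11287 — 4 statements merged into one kernel-verified Lean document; each statement's English description precedes it below -/
import Mathlib

section
/- Let A be the symmetric adjacency matrix of an undirected graph on N nodes with spectral radius λ₁(A), and let P : ℝ → ℝ^N be a differentiable nonnegative vector function satisfying the componentwise differential inequality dP/dt ≤ (βA − δI_N)P(t) with β, δ > 0. Then for all t ≥ 0, the sum ∑_i P_i(t) ≤ √(N · ‖P(0)‖²) · exp((βλ₁(A) − δ)t); in particular if P_i(0) ∈ {0,1} for all i, then ∑_i P_i(t) ≤ √(N · ∑_i P_i(0)) · exp((βλ₁(A) − δ)t). -/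
open Matrix Finset

/-- Grönwall-type bound for the vector of infection probabilities:
if `P` is a nonnegative solution of the componentwise differential inequality
`dP/dt ≤ (βA − δI)P`, with `A` symmetric nonnegative and `lam` its largest
eigenvalue (characterized via the quadratic form), then
`∑ᵢ Pᵢ(t) ≤ √(N‖P(0)‖²) e^{(β lam − δ)t}`; in particular for 0/1 initial data,
`∑ᵢ Pᵢ(t) ≤ √(N ∑ᵢ Pᵢ(0)) e^{(β lam − δ)t}`. -/
theorem stmt0 (N : ℕ) (hN : 0 < N) (A : Matrix (Fin N) (Fin N) ℝ)
    (hAsymm : A.IsSymm) (hAnonneg : ∀ i j, 0 ≤ A i j)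
    (lam : ℝ)
    (hlam_eig : Module.End.HasEigenvalue (Matrix.toLin' A) lam)
    (hlam_max : ∀ x : Fin N → ℝ, x ⬝ᵥ A.mulVec x ≤ lam * (x ⬝ᵥ x))
    (β δ : ℝ) (hβ : 0 < β) (hδ : 0 < δ)
    (P P' : ℝ → Fin N → ℝ)
    (hderiv : ∀ i t, HasDerivAt (fun s => P s i) (P' t i) t)
    (hpos : ∀ t i, 0 ≤ P t i)
    (hineq : ∀ t i, P' t i ≤ ((β • A - δ • (1 : Matrix (Fin N) (Fin N) ℝ)).mulVec (P t)) i)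
    (t : ℝ) (ht : 0 ≤ t) :
    (∑ i, P t i ≤ Real.sqrt ((N : ℝ) * ∑ i, (P 0 i) ^ 2) * Real.exp ((β * lam - δ) * t)) ∧
      ((∀ i, P 0 i = 0 ∨ P 0 i = 1) →
        ∑ i, P t i ≤ Real.sqrt ((N : ℝ) * ∑ i, P 0 i) * Real.exp ((β * lam - δ) * t)) := by
  set c : ℝ := β * lam - δ with hc
  set V : ℝ → ℝ := fun s => ∑ i, (P s i) ^ 2 with hV
  set V' : ℝ → ℝ := fun s => ∑ i, 2 * P s i * P' s i with hV'
  have hVderiv : ∀ s, HasDerivAt V (V' s) s := by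
    intro s
    have : HasDerivAt (fun u => ∑ i, (P u i) ^ 2) (∑ i, 2 * P s i * P' s i) s := by
      apply HasDerivAt.fun_sum
      intro i _
      have h := (hderiv i s).fun_pow 2
      simpa [mul_comm, mul_assoc, mul_left_comm] using h
    simpa [hV] using this
  have hVnonneg : ∀ s, 0 ≤ V s := fun s => Finset.sum_nonneg fun i _ => sq_nonneg _
  -- V' s ≤ 2 c V s
  have hVbound : ∀ s, V' s ≤ 2 * c * V s := by
    intro s
    have hdot : V s = P s ⬝ᵥ P s := by
      simp [hV, dotProduct, sq]
    have h1 : V' s ≤ 2 * (P s ⬝ᵥ ((β • A - δ • (1 : Matrix (Fin N) (Fin N) ℝ)).mulVec (P s))) := by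
      rw [hV']
      have : (2 : ℝ) * (P s ⬝ᵥ ((β • A - δ • (1 : Matrix (Fin N) (Fin N) ℝ)).mulVec (P s)))
          = ∑ i, 2 * P s i * ((β • A - δ • (1 : Matrix (Fin N) (Fin N) ℝ)).mulVec (P s)) i := by
        rw [dotProduct, Finset.mul_sum]
        congr 1; ext i; ring
      rw [this]
      apply Finset.sum_le_sum
      intro i _
      exact mul_le_mul_of_nonneg_left (hineq s i) (by have := hpos s i; linarith)
    have h2 : P s ⬝ᵥ ((β • A - δ • (1 : Matrix (Fin N) (Fin N) ℝ)).mulVec (P s))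
        = β * (P s ⬝ᵥ A.mulVec (P s)) - δ * (P s ⬝ᵥ P s) := by
      rw [Matrix.sub_mulVec, dotProduct_sub, Matrix.smul_mulVec,
        Matrix.smul_mulVec, Matrix.one_mulVec, dotProduct_smul, dotProduct_smul]
      simp [smul_eq_mul]
    have h3 : β * (P s ⬝ᵥ A.mulVec (P s)) ≤ β * (lam * (P s ⬝ᵥ P s)) :=
      mul_le_mul_of_nonneg_left (hlam_max (P s)) hβ.le
    calc V' s ≤ 2 * (β * (P s ⬝ᵥ A.mulVec (P s)) - δ * (P s ⬝ᵥ P s)) := by rw [← h2]; exact h1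
      _ ≤ 2 * (β * (lam * (P s ⬝ᵥ P s)) - δ * (P s ⬝ᵥ P s)) := by linarith
      _ = 2 * c * V s := by rw [hdot, hc]; ring
  -- Grönwall: V t ≤ V 0 * exp (2 c t)
  have hg : ∀ s, HasDerivAt (fun u => V u * Real.exp (-(2 * c) * u))
      ((V' s - 2 * c * V s) * Real.exp (-(2 * c) * s)) s := by
    intro s
    have he : HasDerivAt (fun u : ℝ => Real.exp (-(2 * c) * u))
        (Real.exp (-(2 * c) * s) * -(2 * c)) s := by
      have h0 : HasDerivAt (fun u : ℝ => -(2 * c) * u) (-(2 * c)) s := by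
        simpa using (hasDerivAt_id s).const_mul (-(2 * c))
      simpa [mul_comm] using h0.exp
    have := (hVderiv s).fun_mul he
    exact this.congr_deriv (by ring)
  have hmono : ∀ s : ℝ, 0 ≤ s →
      V s * Real.exp (-(2 * c) * s) ≤ V 0 * Real.exp (-(2 * c) * 0) := by
    intro s hs
    have hanti : Antitone (fun u => V u * Real.exp (-(2 * c) * u)) := by
      apply antitone_of_deriv_nonpos
      · exact fun u => ((hg u).differentiableAt)
      · intro u
        rw [(hg u).deriv]
        have := hVbound u
        have : V' u - 2 * c * V u ≤ 0 := by linarith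
        exact mul_nonpos_of_nonpos_of_nonneg this (Real.exp_nonneg _)
    exact hanti hs
  have hVt : V t ≤ V 0 * Real.exp (2 * c * t) := by
    have := hmono t ht
    rw [mul_zero, Real.exp_zero, mul_one] at this
    have hepos : 0 < Real.exp (-(2 * c) * t) := Real.exp_pos _
    calc V t = V t * Real.exp (-(2 * c) * t) * Real.exp (2 * c * t) := by
          rw [mul_assoc, ← Real.exp_add]; ring_nf; simp
      _ ≤ V 0 * Real.exp (2 * c * t) :=
          mul_le_mul_of_nonneg_right this (Real.exp_nonneg _)
  -- Cauchy–Schwarz step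
  have hsum : ∑ i, P t i ≤ Real.sqrt ((N : ℝ) * V 0) * Real.exp (c * t) := by
    have hcs : (∑ i, P t i) ^ 2 ≤ (N : ℝ) * V t := by
      have := sq_sum_le_card_mul_sum_sq (s := Finset.univ) (f := fun i => P t i)
      simpa [hV] using this
    have h1 : (∑ i, P t i) ^ 2 ≤ (N : ℝ) * V 0 * Real.exp (2 * c * t) := by
      calc (∑ i, P t i) ^ 2 ≤ (N : ℝ) * V t := hcs
        _ ≤ (N : ℝ) * (V 0 * Real.exp (2 * c * t)) :=
            mul_le_mul_of_nonneg_left hVt (Nat.cast_nonneg N)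
        _ = (N : ℝ) * V 0 * Real.exp (2 * c * t) := by ring
    have h2 : ∑ i, P t i ≤ Real.sqrt ((N : ℝ) * V 0 * Real.exp (2 * c * t)) := by
      rw [show ((N : ℝ) * V 0 * Real.exp (2 * c * t)) = ((N : ℝ) * V 0 * Real.exp (2 * c * t)) from rfl]
      have hnn : 0 ≤ ∑ i, P t i := Finset.sum_nonneg fun i _ => hpos t i
      calc ∑ i, P t i = Real.sqrt ((∑ i, P t i) ^ 2) := (Real.sqrt_sq hnn).symm
        _ ≤ Real.sqrt ((N : ℝ) * V 0 * Real.exp (2 * c * t)) := Real.sqrt_le_sqrt h1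
    have h3 : Real.sqrt ((N : ℝ) * V 0 * Real.exp (2 * c * t))
        = Real.sqrt ((N : ℝ) * V 0) * Real.exp (c * t) := by
      rw [show Real.exp (2 * c * t) = (Real.exp (c * t)) ^ 2 by
            rw [← Real.exp_nat_mul]; ring_nf,
          Real.sqrt_mul (by positivity), Real.sqrt_sq (Real.exp_nonneg _)]
    rw [← h3]; exact h2
  constructor
  · simpa [hV, hc] using hsum
  · intro h01
    have : ∑ i, (P 0 i) ^ 2 = ∑ i, P 0 i := by
      apply Finset.sum_congr rfl
      intro i _
      rcases h01 i with h | h <;> simp [h]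
    have h4 := hsum
    rw [show V 0 = ∑ i, P 0 i ^ 2 from rfl, this] at h4
    simpa [hc] using h4
end

section
/- Let G be an undirected graph with an equitable partition π = {V₁,…,V_n}. Then the set Ω̃ = { Y ∈ Γ̃ : S_i = S_r, I_i = I_r, R_i = R_r for all i, r in the same cell V_h } is positively invariant for the mean-field SIRS_v system (with intra-cell infection rate β and inter-cell rate εβ). In particular, if all nodes in each cell have identical initial state probabilities, then their state probabilities coincide for all t ≥ 0, and the dynamics is determined by the n-cell reduced system dS̄_h/dt = −βS̄_h(∑_{m≠h} ε d_{hm} Ī_m + d_h Ī_h) + γR̄_h − σS̄_h, dĪ_h/dt = βS̄_h(∑_{m≠h} ε d_{hm} Ī_m + d_h Ī_h) − δĪ_h, dR̄_h/dt = δĪ_h − γR̄_h + σS̄_h. -/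
open Set Filter Finset

/-- Scalar Grönwall: a C¹ function with `f 0 ≤ 0` and `f' ≤ K f` on `[0,b]`
stays `≤ 0` on `[0,b]`. -/
lemma stmt6_gronwall_zero {f f' : ℝ → ℝ} {b K : ℝ}
    (hd : ∀ t, HasDerivAt f (f' t) t) (h0 : f 0 ≤ 0)
    (hb : ∀ t ∈ Set.Icc 0 b, f' t ≤ K * f t) :
    ∀ t ∈ Set.Icc 0 b, f t ≤ 0 := by
  intro t ht
  have key := le_gronwallBound_of_liminf_deriv_right_le (f := f) (f' := f')
    (δ := 0) (K := K) (ε := 0) (a := 0) (b := b)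
    (fun x _ => ((hd x).continuousAt).continuousWithinAt)
    ?_ h0 (fun x hx => by simpa using hb x (Set.Ico_subset_Icc_self hx)) t ht
  · simpa [gronwallBound_ε0_δ0] using key
  · intro x _ r hr
    have hT : Filter.Tendsto (slope f x) (nhdsWithin x (Set.Ioi x)) (nhds (f' x)) :=
      ((hasDerivAt_iff_tendsto_slope.1 (hd x)).mono_left
        (nhdsWithin_mono x (by intro z hz; exact ne_of_gt hz)))
    have hev : ∀ᶠ z in nhdsWithin x (Set.Ioi x), (z - x)⁻¹ * (f z - f x) < r := by
      filter_upwards [hT.eventually_lt_const hr] with z hz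
      simpa [slope_def_field, div_eq_inv_mul] using hz
    exact hev.frequently

lemma stmt6_hasDerivAt_minsq (x : ℝ) :
    HasDerivAt (fun y : ℝ => (min y 0) ^ 2) (2 * min x 0) x := by
  rcases lt_trichotomy x 0 with hx | hx | hx
  · have hev : (fun y : ℝ => (min y 0) ^ 2) =ᶠ[nhds x] fun y => y ^ 2 := by
      filter_upwards [eventually_lt_nhds hx] with y hy
      simp [min_eq_left hy.le]
    have h2 : HasDerivAt (fun y : ℝ => y ^ 2) (2 * x) x := by
      simpa using hasDerivAt_pow 2 x
    have := h2.congr_of_eventuallyEq hev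
    simpa [min_eq_left hx.le] using this
  · subst hx
    rw [hasDerivAt_iff_tendsto_slope]
    have hb : ∀ z : ℝ, |slope (fun y : ℝ => (min y 0) ^ 2) 0 z| ≤ |z| := by
      intro z
      rcases eq_or_ne z 0 with rfl | hz
      · simp [slope]
      · have h1 : (min z 0) ^ 2 ≤ z ^ 2 := by
          rcases le_or_gt z 0 with h | h
          · simp [min_eq_left h]
          · simp [min_eq_right h.le, pow_two_nonneg]
        have : |slope (fun y : ℝ => (min y 0) ^ 2) 0 z| = (min z 0) ^ 2 / |z| := by
          rw [slope_def_field]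
          simp [abs_div, abs_of_nonneg (pow_two_nonneg (min z 0))]
        rw [this, div_le_iff₀ (abs_pos.2 hz)]
        nlinarith [h1, abs_mul_abs_self z, sq_nonneg z]
    have hT : Tendsto (fun z : ℝ => |z|) (nhdsWithin (0:ℝ) {0}ᶜ) (nhds 0) := by
      have := (continuous_abs.tendsto (0:ℝ))
      simpa using this.mono_left nhdsWithin_le_nhds
    have hsq := squeeze_zero_norm
      (f := fun z => slope (fun y : ℝ => (min y 0) ^ 2) 0 z)
      (a := fun z : ℝ => |z|) (t₀ := nhdsWithin (0:ℝ) {0}ᶜ) hb hT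
    simpa using hsq
  · have hev : (fun y : ℝ => (min y 0) ^ 2) =ᶠ[nhds x] fun _ => (0:ℝ) := by
      filter_upwards [eventually_gt_nhds hx] with y hy
      simp [min_eq_right hy.le]
    have := (hasDerivAt_const x (0:ℝ)).congr_of_eventuallyEq hev
    simpa [min_eq_right hx.le] using this

/-- casework AM-GM: for `c ≥ 0`, `2 c (min a 0) x ≤ c ((min a 0)² + (min x 0)²)`. -/
lemma stmt6_amgm {c a x : ℝ} (hc : 0 ≤ c) :
    2 * c * min a 0 * x ≤ c * ((min a 0) ^ 2 + (min x 0) ^ 2) := by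
  rcases le_or_gt 0 x with h | h
  · have h1 : min a 0 * x ≤ 0 := mul_nonpos_of_nonpos_of_nonneg (min_le_right a 0) h
    nlinarith [pow_two_nonneg (min a 0), pow_two_nonneg (min x 0)]
  · rw [min_eq_left h.le]
    nlinarith [sq_nonneg (min a 0 - x)]

/-- for a coefficient `P ∈ [0, M]`: `2 (min a 0) x P ≤ M ((min a 0)² + (min x 0)²)`. -/
lemma stmt6_amgm2 {a x P M : ℝ} (hP : 0 ≤ P) (hPM : P ≤ M) :
    2 * min a 0 * x * P ≤ M * ((min a 0) ^ 2 + (min x 0) ^ 2) := by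
  have ha : min a 0 ≤ 0 := min_le_right _ _
  have hM : 0 ≤ M := hP.trans hPM
  rcases le_or_gt 0 x with h | h
  · have h1 : 2 * min a 0 * x * P ≤ 0 := by
      apply mul_nonpos_of_nonpos_of_nonneg _ hP
      nlinarith
    nlinarith [sq_nonneg (min a 0), sq_nonneg (min x 0)]
  · rw [min_eq_left h.le]
    have h0 : 0 ≤ 2 * min a 0 * x := by nlinarith
    have h1 : 2 * min a 0 * x * P ≤ 2 * min a 0 * x * M :=
      mul_le_mul_of_nonneg_left hPM h0
    nlinarith [sq_nonneg (min a 0 - x)]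

lemma stmt6_mul_abs_le {c p M q : ℝ} (hc : |c| ≤ M) (hp : |p| ≤ q) : c * p ≤ M * q :=
  calc c * p ≤ |c * p| := le_abs_self _
    _ = |c| * |p| := abs_mul _ _
    _ ≤ M * q := mul_le_mul hc hp (abs_nonneg _) ((abs_nonneg c).trans hc)

lemma stmt6_two_mul_le {c a b : ℝ} (hc : 0 ≤ c) : 2 * c * a * b ≤ c * (a ^ 2 + b ^ 2) := by
  nlinarith [mul_nonneg hc (sq_nonneg (a - b))]

lemma stmt6_abs_two_mul (a b : ℝ) : |2 * a * b| ≤ a ^ 2 + b ^ 2 := by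
  rw [abs_le]
  constructor
  · nlinarith [sq_nonneg (a + b)]
  · nlinarith [sq_nonneg (a - b)]

lemma stmt6_abs_min_le (x : ℝ) : |min x 0| ≤ |x| := by
  rcases le_or_gt x 0 with h | h
  · rw [min_eq_left h]
  · rw [min_eq_right h.le]; simp

lemma stmt6_min_mul_self (x : ℝ) : min x 0 * x = (min x 0) ^ 2 := by
  rcases le_or_gt x 0 with h | h
  · rw [min_eq_left h]; ring
  · rw [min_eq_right h.le]; ring

/-- fiberwise computation of weighted sums with cell-constant vectors. -/
lemma stmt6_fiber {N n : ℕ} (a : Fin N → Fin N → ℝ) (cell : Fin N → Fin n)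
    (d : Fin n → Fin n → ℝ)
    (hequit : ∀ (i : Fin N) (m : Fin n),
      ∑ z ∈ Finset.univ.filter (fun z => cell z = m), a i z = d (cell i) m)
    (ε : ℝ) (w : Fin N → Fin N → ℝ)
    (hw : ∀ i j, w i j = (if cell i = cell j then 1 else ε) * a i j)
    (c : Fin n → ℝ) (i : Fin N) :
    ∑ j, w i j * c (cell j)
      = ∑ m, (if cell i = m then 1 else ε) * d (cell i) m * c m := by
  rw [← Finset.sum_fiberwise Finset.univ cell (fun j => w i j * c (cell j))]
  refine Finset.sum_congr rfl (fun m _ => ?_)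
  have : ∑ j ∈ Finset.univ.filter (fun j => cell j = m), w i j * c (cell j)
      = ∑ j ∈ Finset.univ.filter (fun j => cell j = m),
          ((if cell i = m then 1 else ε) * c m) * a i j := by
    refine Finset.sum_congr rfl (fun j hj => ?_)
    have hj' : cell j = m := by simpa using hj
    rw [hw, hj']; ring
  rw [this, ← Finset.mul_sum, hequit]; ring
set_option maxHeartbeats 1600000 in
/-- for a graph with an equitable partition (cells given by
`cell : Fin N → Fin n`, cell degrees `d`, intra-cell infection rate `β` and
inter-cell rate `εβ`), the set `Ω̃` of points of `Γ̃` whose coordinates are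
constant on each cell is positively invariant for the mean-field SIRS_v
system; moreover, the within-cell-constant solution is given by a solution of
the `n`-cell reduced system. -/
theorem stmt6 (N n : ℕ) (a : Fin N → Fin N → ℝ)
    (ha01 : ∀ i j, a i j = 0 ∨ a i j = 1) (hsymm : ∀ i j, a i j = a j i)
    (cell : Fin N → Fin n) (hcell : Function.Surjective cell)
    (d : Fin n → Fin n → ℝ)
    (hequit : ∀ (i : Fin N) (m : Fin n),
      ∑ z ∈ Finset.univ.filter (fun z => cell z = m), a i z = d (cell i) m)
    (β δ γ σ ε : ℝ) (hβ : 0 < β) (hδ : 0 < δ) (hγ : 0 < γ) (hσ : 0 ≤ σ)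
    (hε : 0 < ε) (hε1 : ε ≤ 1)
    -- weighted adjacency: weight 1 within a cell, weight ε across cells
    (w : Fin N → Fin N → ℝ)
    (hw : ∀ i j, w i j = (if cell i = cell j then 1 else ε) * a i j)
    (S I R : ℝ → Fin N → ℝ)
    (hS : ∀ t i, HasDerivAt (fun s => S s i)
      (-(S t i) * (∑ j, β * w i j * I t j) + γ * R t i - σ * S t i) t)
    (hI : ∀ t i, HasDerivAt (fun s => I s i)
      (S t i * (∑ j, β * w i j * I t j) - δ * I t i) t)
    (hR : ∀ t i, HasDerivAt (fun s => R s i)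
      (δ * I t i - γ * R t i + σ * S t i) t)
    -- initial condition in Ω̃ : nonnegative, summing to one, constant on cells
    (h0 : ∀ i, 0 ≤ S 0 i ∧ 0 ≤ I 0 i ∧ 0 ≤ R 0 i ∧ S 0 i + I 0 i + R 0 i = 1)
    (h0cell : ∀ i r : Fin N, cell i = cell r →
      S 0 i = S 0 r ∧ I 0 i = I 0 r ∧ R 0 i = R 0 r) :
    -- positive invariance of Ω̃
    (∀ t : ℝ, 0 ≤ t →
      (∀ i, 0 ≤ S t i ∧ 0 ≤ I t i ∧ 0 ≤ R t i ∧ S t i + I t i + R t i = 1) ∧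
      (∀ i r : Fin N, cell i = cell r →
        S t i = S t r ∧ I t i = I t r ∧ R t i = R t r)) ∧
    -- the dynamics is determined by the reduced n-cell system
    (∃ Sb Ib Rb : ℝ → Fin n → ℝ,
      (∀ t : ℝ, 0 ≤ t → ∀ i : Fin N,
        S t i = Sb t (cell i) ∧ I t i = Ib t (cell i) ∧ R t i = Rb t (cell i)) ∧
      (∀ t : ℝ, 0 ≤ t → ∀ h : Fin n,
        HasDerivAt (fun s => Sb s h)
          (-(β * Sb t h) * ((∑ m ∈ Finset.univ.erase h, ε * d h m * Ib t m)
              + d h h * Ib t h) + γ * Rb t h - σ * Sb t h) t ∧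
        HasDerivAt (fun s => Ib s h)
          (β * Sb t h * ((∑ m ∈ Finset.univ.erase h, ε * d h m * Ib t m)
              + d h h * Ib t h) - δ * Ib t h) t ∧
        HasDerivAt (fun s => Rb s h)
          (δ * Ib t h - γ * Rb t h + σ * Sb t h) t)) := by
  classical
  -- weight bounds
  have hw0 : ∀ i j, 0 ≤ w i j := by
    intro i j
    rw [hw i j]
    have h1 : (0:ℝ) ≤ (if cell i = cell j then 1 else ε) := by
      split <;> [norm_num; exact hε.le]
    have h2 : 0 ≤ a i j := by rcases ha01 i j with h | h <;> rw [h] <;> norm_num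
    exact mul_nonneg h1 h2
  have hw1 : ∀ i j, w i j ≤ 1 := by
    intro i j
    rw [hw i j]
    have h1 : (if cell i = cell j then 1 else ε) ≤ (1:ℝ) := by
      split <;> [norm_num; exact hε1]
    have h1' : (0:ℝ) ≤ (if cell i = cell j then 1 else ε) := by
      split <;> [norm_num; exact hε.le]
    have h2 : 0 ≤ a i j ∧ a i j ≤ 1 := by rcases ha01 i j with h | h <;> rw [h] <;> norm_num
    calc (if cell i = cell j then 1 else ε) * a i j ≤ 1 * 1 :=
          mul_le_mul h1 h2.2 h2.1 (by norm_num)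
      _ = 1 := by norm_num
  -- conservation of mass
  have hsum : ∀ t i, S t i + I t i + R t i = 1 := by
    intro t i
    have hderiv : ∀ s : ℝ, HasDerivAt (fun u => S u i + I u i + R u i) 0 s := by
      intro s
      have h := ((hS s i).fun_add (hI s i)).fun_add (hR s i)
      refine h.congr_deriv ?_
      ring
    have hdiff : Differentiable ℝ (fun u => S u i + I u i + R u i) :=
      fun s => (hderiv s).differentiableAt
    have hconst := is_const_of_deriv_eq_zero hdiff (fun s => (hderiv s).deriv) t 0
    rw [hconst]
    exact (h0 i).2.2.2
  -- representative of each cell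
  have hrep : ∀ h : Fin n, cell (Function.surjInv hcell h) = h :=
    fun h => Function.surjInv_eq hcell h
  set rep : Fin n → Fin N := Function.surjInv hcell with hrepdef
  -- uniform bounds on compact time intervals
  have hcont : ∀ i, Continuous (fun t => S t i) ∧ Continuous (fun t => I t i) ∧
      Continuous (fun t => R t i) := by
    intro i
    exact ⟨continuous_iff_continuousAt.2 fun t => (hS t i).continuousAt,
      continuous_iff_continuousAt.2 fun t => (hI t i).continuousAt,
      continuous_iff_continuousAt.2 fun t => (hR t i).continuousAt⟩
  have hbound : ∀ b : ℝ, ∃ C : ℝ, 0 ≤ C ∧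
      ∀ t ∈ Set.Icc (0:ℝ) b, ∀ i, |S t i| ≤ C ∧ |I t i| ≤ C := by
    intro b
    have hg : Continuous (fun t => ∑ i, (|S t i| + |I t i|)) := by
      apply continuous_finset_sum
      intro i _
      exact ((hcont i).1.abs.add (hcont i).2.1.abs)
    obtain ⟨C, hC⟩ := (isCompact_Icc (a := (0:ℝ)) (b := b)).exists_bound_of_continuousOn
      hg.continuousOn
    refine ⟨max C 0, le_max_right _ _, fun t ht i => ?_⟩
    have hsum_le : ∑ j, (|S t j| + |I t j|) ≤ max C 0 := by
      calc ∑ j, (|S t j| + |I t j|) ≤ |∑ j, (|S t j| + |I t j|)| := le_abs_self _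
        _ ≤ C := by simpa using hC t ht
        _ ≤ max C 0 := le_max_left _ _
    have hterm : |S t i| + |I t i| ≤ ∑ j, (|S t j| + |I t j|) :=
      Finset.single_le_sum (f := fun j => |S t j| + |I t j|)
        (fun j _ => by positivity) (Finset.mem_univ i)
    constructor
    · have := abs_nonneg (I t i); linarith
    · have := abs_nonneg (S t i); linarith
  -- nonnegativity on [0, b]
  have key1 : ∀ b : ℝ, ∀ t ∈ Set.Icc (0:ℝ) b, ∀ i,
      0 ≤ S t i ∧ 0 ≤ I t i ∧ 0 ≤ R t i := by
    intro b
    obtain ⟨C, hC0, hC⟩ := hbound b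
    set f : ℝ → ℝ := fun t => ∑ i, ((min (S t i) 0) ^ 2 + (min (I t i) 0) ^ 2
      + (min (R t i) 0) ^ 2) with hfdef
    set f' : ℝ → ℝ := fun t => ∑ i,
      (2 * min (S t i) 0 * (-(S t i) * (∑ j, β * w i j * I t j) + γ * R t i - σ * S t i)
       + 2 * min (I t i) 0 * (S t i * (∑ j, β * w i j * I t j) - δ * I t i)
       + 2 * min (R t i) 0 * (δ * I t i - γ * R t i + σ * S t i)) with hf'def
    have hd : ∀ t, HasDerivAt f (f' t) t := by
      intro t
      apply HasDerivAt.fun_sum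
      intro i _
      have h1 := (stmt6_hasDerivAt_minsq (S t i)).comp t (hS t i)
      have h2 := (stmt6_hasDerivAt_minsq (I t i)).comp t (hI t i)
      have h3 := (stmt6_hasDerivAt_minsq (R t i)).comp t (hR t i)
      have h4 := (h1.fun_add h2).fun_add h3
      simpa [Function.comp] using h4
    have hf0 : f 0 ≤ 0 := by
      have hz : f 0 = 0 := by
        apply Finset.sum_eq_zero
        intro i _
        rw [min_eq_right (h0 i).1, min_eq_right (h0 i).2.1, min_eq_right (h0 i).2.2.1]
        ring
      rw [hz]
    set K : ℝ := 5 * β * (N:ℝ) * C + γ + δ + σ + β * C * (N:ℝ) with hKdef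
    have hmain : ∀ t ∈ Set.Icc (0:ℝ) b, f' t ≤ K * f t := by
      intro t ht
      have hΦabs : ∀ i, |∑ j, β * w i j * I t j| ≤ β * (N:ℝ) * C := by
        intro i
        calc |∑ j, β * w i j * I t j| ≤ ∑ j, |β * w i j * I t j| :=
              Finset.abs_sum_le_sum_abs _ _
          _ ≤ ∑ _j : Fin N, β * C := by
              refine Finset.sum_le_sum (fun j _ => ?_)
              rw [abs_mul, abs_mul, abs_of_nonneg hβ.le, abs_of_nonneg (hw0 i j)]
              have h5 : w i j * |I t j| ≤ 1 * C :=
                mul_le_mul (hw1 i j) (hC t ht j).2 (abs_nonneg _) zero_le_one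
              calc β * w i j * |I t j| = β * (w i j * |I t j|) := by ring
                _ ≤ β * (1 * C) := mul_le_mul_of_nonneg_left h5 hβ.le
                _ = β * C := by ring
          _ = β * (N:ℝ) * C := by
              rw [Finset.sum_const, Finset.card_univ, Fintype.card_fin, nsmul_eq_mul]
              ring
      have hperi : ∀ i,
          2 * min (S t i) 0 * (-(S t i) * (∑ j, β * w i j * I t j) + γ * R t i - σ * S t i)
          + 2 * min (I t i) 0 * (S t i * (∑ j, β * w i j * I t j) - δ * I t i)
          + 2 * min (R t i) 0 * (δ * I t i - γ * R t i + σ * S t i)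
          ≤ (5 * β * (N:ℝ) * C + γ + δ + σ)
              * ((min (S t i) 0) ^ 2 + (min (I t i) 0) ^ 2 + (min (R t i) 0) ^ 2)
            + (β * C) * ∑ j, (min (I t j) 0) ^ 2 := by
        intro i
        set sS := min (S t i) 0 with hsS
        set uI := min (I t i) 0 with huI
        set vR := min (R t i) 0 with hvR
        set Φi := ∑ j, β * w i j * I t j with hΦi
        have habsΦ := hΦabs i
        rw [← hΦi] at habsΦ
        have eS : min (S t i) 0 * S t i = min (S t i) 0 ^ 2 := stmt6_min_mul_self (S t i)
        have eI : min (I t i) 0 * I t i = min (I t i) 0 ^ 2 := stmt6_min_mul_self (I t i)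
        rw [← hsS] at eS
        rw [← huI] at eI
        -- S-part pieces
        have p1 : 2 * sS * (-(S t i) * Φi) ≤ 2 * (β * (N:ℝ) * C) * sS ^ 2 := by
          have e : 2 * sS * (-(S t i) * Φi) = (-Φi) * (2 * (sS * S t i)) := by ring
          rw [e, eS]
          have h1 : -Φi ≤ β * (N:ℝ) * C := by
            have h2 := neg_abs_le Φi
            linarith [neg_le_neg habsΦ, abs_nonneg Φi, (abs_le.1 habsΦ).1]
          nlinarith [sq_nonneg sS]
        have p2 : 2 * sS * (γ * R t i) ≤ γ * (sS ^ 2 + vR ^ 2) := by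
          have h := stmt6_amgm (c := γ) (a := S t i) (x := R t i) hγ.le
          rw [← hsS, ← hvR] at h
          calc 2 * sS * (γ * R t i) = 2 * γ * sS * R t i := by ring
            _ ≤ γ * (sS ^ 2 + vR ^ 2) := h
        have p3 : 2 * sS * (-(σ * S t i)) ≤ 0 := by
          have e : 2 * sS * (-(σ * S t i)) = -σ * (2 * (sS * S t i)) := by ring
          rw [e, eS]
          nlinarith [sq_nonneg sS]
        -- I-part pieces
        have hsplit : Φi = (∑ j, β * w i j * (I t j - min (I t j) 0))
            + ∑ j, β * w i j * min (I t j) 0 := by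
          rw [hΦi, ← Finset.sum_add_distrib]
          exact Finset.sum_congr rfl (fun j _ => by ring)
        have hΦp0 : 0 ≤ ∑ j, β * w i j * (I t j - min (I t j) 0) :=
          Finset.sum_nonneg (fun j _ => mul_nonneg (mul_nonneg hβ.le (hw0 i j))
            (by linarith [min_le_left (I t j) 0]))
        have hΦpC : (∑ j, β * w i j * (I t j - min (I t j) 0)) ≤ 2 * β * (N:ℝ) * C := by
          calc ∑ j, β * w i j * (I t j - min (I t j) 0) ≤ ∑ _j : Fin N, β * (2 * C) := by
                refine Finset.sum_le_sum (fun j _ => ?_)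
                have h1 := abs_le.1 (hC t ht j).2
                have h4 := abs_le.1 ((stmt6_abs_min_le (I t j)).trans (hC t ht j).2)
                have hIu : 0 ≤ I t j - min (I t j) 0 := by
                  linarith [min_le_left (I t j) 0]
                have hIu2 : I t j - min (I t j) 0 ≤ 2 * C := by linarith
                have hb1 : 0 ≤ β * w i j := mul_nonneg hβ.le (hw0 i j)
                have hb2 : β * w i j ≤ β := by nlinarith [hw1 i j, hw0 i j]
                exact mul_le_mul hb2 hIu2 hIu hβ.le
            _ = 2 * β * (N:ℝ) * C := by
                rw [Finset.sum_const, Finset.card_univ, Fintype.card_fin, nsmul_eq_mul]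
                ring
        have p4a : 2 * uI * (S t i) * (∑ j, β * w i j * (I t j - min (I t j) 0))
            ≤ (2 * β * (N:ℝ) * C) * (uI ^ 2 + sS ^ 2) := by
          have h := stmt6_amgm2 (a := I t i) (x := S t i) hΦp0 hΦpC
          rw [← huI, ← hsS] at h
          exact h
        have p4b : 2 * uI * (S t i) * (∑ j, β * w i j * min (I t j) 0)
            ≤ β * C * (N:ℝ) * uI ^ 2 + β * C * ∑ j, (min (I t j) 0) ^ 2 := by
          have e : 2 * uI * (S t i) * (∑ j, β * w i j * min (I t j) 0)
              = ∑ j, (β * w i j * S t i) * (2 * uI * min (I t j) 0) := by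
            rw [Finset.mul_sum]
            exact Finset.sum_congr rfl (fun j _ => by ring)
          rw [e]
          calc ∑ j, (β * w i j * S t i) * (2 * uI * min (I t j) 0)
              ≤ ∑ j, (β * C) * (uI ^ 2 + (min (I t j) 0) ^ 2) := by
                refine Finset.sum_le_sum (fun j _ => ?_)
                refine stmt6_mul_abs_le ?_ (stmt6_abs_two_mul uI (min (I t j) 0))
                rw [abs_mul, abs_mul, abs_of_nonneg hβ.le, abs_of_nonneg (hw0 i j)]
                have h5 : w i j * |S t i| ≤ 1 * C :=
                  mul_le_mul (hw1 i j) (hC t ht i).1 (abs_nonneg _) zero_le_one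
                calc β * w i j * |S t i| = β * (w i j * |S t i|) := by ring
                  _ ≤ β * (1 * C) := mul_le_mul_of_nonneg_left h5 hβ.le
                  _ = β * C := by ring
            _ = β * C * (N:ℝ) * uI ^ 2 + β * C * ∑ j, (min (I t j) 0) ^ 2 := by
                rw [← Finset.mul_sum, Finset.sum_add_distrib, Finset.sum_const,
                  Finset.card_univ, Fintype.card_fin, nsmul_eq_mul, Finset.mul_sum,
                  ← Finset.mul_sum]
                ring
        have pI : 2 * uI * (S t i * Φi - δ * I t i)
            ≤ (2 * β * (N:ℝ) * C) * (uI ^ 2 + sS ^ 2) + β * C * (N:ℝ) * uI ^ 2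
              + β * C * ∑ j, (min (I t j) 0) ^ 2 := by
          have e : 2 * uI * (S t i * Φi - δ * I t i)
              = 2 * uI * (S t i) * (∑ j, β * w i j * (I t j - min (I t j) 0))
                + 2 * uI * (S t i) * (∑ j, β * w i j * min (I t j) 0)
                - δ * (2 * (uI * I t i)) := by
            rw [hsplit]; ring
          rw [e, eI]
          have hnn : 0 ≤ δ * (2 * uI ^ 2) := by positivity
          linarith [p4a, p4b]
        -- R-part pieces
        have p6 : 2 * vR * (δ * I t i) ≤ δ * (vR ^ 2 + uI ^ 2) := by
          have h := stmt6_amgm (c := δ) (a := R t i) (x := I t i) hδ.le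
          rw [← hvR, ← huI] at h
          calc 2 * vR * (δ * I t i) = 2 * δ * vR * I t i := by ring
            _ ≤ δ * (vR ^ 2 + uI ^ 2) := h
        have p7 : 2 * vR * (-(γ * R t i)) ≤ 0 := by
          have eR : min (R t i) 0 * R t i = min (R t i) 0 ^ 2 := stmt6_min_mul_self (R t i)
          rw [← hvR] at eR
          have e : 2 * vR * (-(γ * R t i)) = -γ * (2 * (vR * R t i)) := by ring
          rw [e, eR]
          nlinarith [sq_nonneg vR]
        have p8 : 2 * vR * (σ * S t i) ≤ σ * (vR ^ 2 + sS ^ 2) := by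
          have h := stmt6_amgm (c := σ) (a := R t i) (x := S t i) hσ
          rw [← hvR, ← hsS] at h
          calc 2 * vR * (σ * S t i) = 2 * σ * vR * S t i := by ring
            _ ≤ σ * (vR ^ 2 + sS ^ 2) := h
        have pS : 2 * sS * (-(S t i) * Φi + γ * R t i - σ * S t i)
            ≤ 2 * (β * (N:ℝ) * C) * sS ^ 2 + γ * (sS ^ 2 + vR ^ 2) := by
          have e : 2 * sS * (-(S t i) * Φi + γ * R t i - σ * S t i)
              = 2 * sS * (-(S t i) * Φi) + 2 * sS * (γ * R t i)
                + 2 * sS * (-(σ * S t i)) := by ring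
          rw [e]
          linarith [p1, p2, p3]
        have pR : 2 * vR * (δ * I t i - γ * R t i + σ * S t i)
            ≤ δ * (vR ^ 2 + uI ^ 2) + σ * (vR ^ 2 + sS ^ 2) := by
          have e : 2 * vR * (δ * I t i - γ * R t i + σ * S t i)
              = 2 * vR * (δ * I t i) + 2 * vR * (-(γ * R t i))
                + 2 * vR * (σ * S t i) := by ring
          rw [e]
          linarith [p6, p7, p8]
        have s1 : 0 ≤ (β * (N:ℝ) * C) * sS ^ 2 := by positivity
        have s2 : 0 ≤ δ * sS ^ 2 := by positivity
        have s3 : 0 ≤ (β * (N:ℝ) * C) * uI ^ 2 := by positivity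
        have s4 : 0 ≤ γ * uI ^ 2 := by positivity
        have s5 : 0 ≤ σ * uI ^ 2 := by positivity
        have s6 : 0 ≤ (β * (N:ℝ) * C) * vR ^ 2 := by positivity
        nlinarith [pS, pI, pR, s1, s2, s3, s4, s5, s6]
      show (∑ i,
          (2 * min (S t i) 0 * (-(S t i) * (∑ j, β * w i j * I t j) + γ * R t i - σ * S t i)
           + 2 * min (I t i) 0 * (S t i * (∑ j, β * w i j * I t j) - δ * I t i)
           + 2 * min (R t i) 0 * (δ * I t i - γ * R t i + σ * S t i))) ≤ K * f t
      calc (∑ i,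
          (2 * min (S t i) 0 * (-(S t i) * (∑ j, β * w i j * I t j) + γ * R t i - σ * S t i)
           + 2 * min (I t i) 0 * (S t i * (∑ j, β * w i j * I t j) - δ * I t i)
           + 2 * min (R t i) 0 * (δ * I t i - γ * R t i + σ * S t i)))
          ≤ ∑ i, ((5 * β * (N:ℝ) * C + γ + δ + σ)
              * ((min (S t i) 0) ^ 2 + (min (I t i) 0) ^ 2 + (min (R t i) 0) ^ 2)
            + (β * C) * ∑ j, (min (I t j) 0) ^ 2) :=
            Finset.sum_le_sum (fun i _ => hperi i)
        _ = (5 * β * (N:ℝ) * C + γ + δ + σ) * f t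
            + (N:ℝ) * ((β * C) * ∑ j, (min (I t j) 0) ^ 2) := by
            rw [Finset.sum_add_distrib, ← Finset.mul_sum, Finset.sum_const,
              Finset.card_univ, Fintype.card_fin, nsmul_eq_mul, hfdef]
        _ ≤ (5 * β * (N:ℝ) * C + γ + δ + σ) * f t + (N:ℝ) * ((β * C) * f t) := by
            have h1 : ∑ j, (min (I t j) 0) ^ 2 ≤ f t := by
              rw [hfdef]
              exact Finset.sum_le_sum (fun j _ => by
                nlinarith [sq_nonneg (min (S t j) 0), sq_nonneg (min (R t j) 0)])
            have h2 : (β * C) * ∑ j, (min (I t j) 0) ^ 2 ≤ (β * C) * f t :=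
              mul_le_mul_of_nonneg_left h1 (by positivity)
            have h3 : (N:ℝ) * ((β * C) * ∑ j, (min (I t j) 0) ^ 2)
                ≤ (N:ℝ) * ((β * C) * f t) :=
              mul_le_mul_of_nonneg_left h2 (Nat.cast_nonneg N)
            linarith
        _ = K * f t := by rw [hKdef]; ring
    have hle := stmt6_gronwall_zero hd hf0 hmain
    intro t ht i
    have hft := hle t ht
    have hterm : (min (S t i) 0) ^ 2 + (min (I t i) 0) ^ 2 + (min (R t i) 0) ^ 2 ≤ 0 := by
      have h1 : (min (S t i) 0) ^ 2 + (min (I t i) 0) ^ 2 + (min (R t i) 0) ^ 2 ≤ f t :=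
        Finset.single_le_sum
          (f := fun j => (min (S t j) 0) ^ 2 + (min (I t j) 0) ^ 2 + (min (R t j) 0) ^ 2)
          (fun j _ => by positivity) (Finset.mem_univ i)
      linarith
    have e1 : min (S t i) 0 = 0 := by
      nlinarith [sq_nonneg (min (S t i) 0), sq_nonneg (min (I t i) 0),
        sq_nonneg (min (R t i) 0)]
    have e2 : min (I t i) 0 = 0 := by
      nlinarith [sq_nonneg (min (S t i) 0), sq_nonneg (min (I t i) 0),
        sq_nonneg (min (R t i) 0)]
    have e3 : min (R t i) 0 = 0 := by
      nlinarith [sq_nonneg (min (S t i) 0), sq_nonneg (min (I t i) 0),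
        sq_nonneg (min (R t i) 0)]
    exact ⟨min_eq_right_iff.1 e1, min_eq_right_iff.1 e2, min_eq_right_iff.1 e3⟩
  -- cell-constancy on [0, b]
  have key2 : ∀ b : ℝ, ∀ t ∈ Set.Icc (0:ℝ) b, ∀ i,
      S t i = S t (rep (cell i)) ∧ I t i = I t (rep (cell i)) ∧
      R t i = R t (rep (cell i)) := by
    intro b
    obtain ⟨C, hC0, hC⟩ := hbound b
    set g : ℝ → ℝ := fun t => ∑ i, ((S t i - S t (rep (cell i))) ^ 2
      + (I t i - I t (rep (cell i))) ^ 2 + (R t i - R t (rep (cell i))) ^ 2) with hgdef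
    set g' : ℝ → ℝ := fun t => ∑ i,
      (2 * (S t i - S t (rep (cell i))) *
         ((-(S t i) * (∑ j, β * w i j * I t j) + γ * R t i - σ * S t i)
          - (-(S t (rep (cell i))) * (∑ j, β * w (rep (cell i)) j * I t j)
             + γ * R t (rep (cell i)) - σ * S t (rep (cell i))))
       + 2 * (I t i - I t (rep (cell i))) *
         ((S t i * (∑ j, β * w i j * I t j) - δ * I t i)
          - (S t (rep (cell i)) * (∑ j, β * w (rep (cell i)) j * I t j)
             - δ * I t (rep (cell i))))
       + 2 * (R t i - R t (rep (cell i))) *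
         ((δ * I t i - γ * R t i + σ * S t i)
          - (δ * I t (rep (cell i)) - γ * R t (rep (cell i))
             + σ * S t (rep (cell i))))) with hg'def
    have hd : ∀ t, HasDerivAt g (g' t) t := by
      intro t
      apply HasDerivAt.fun_sum
      intro i _
      have h1 := ((hS t i).fun_sub (hS t (rep (cell i)))).fun_pow 2
      have h2 := ((hI t i).fun_sub (hI t (rep (cell i)))).fun_pow 2
      have h3 := ((hR t i).fun_sub (hR t (rep (cell i)))).fun_pow 2
      have h4 := (h1.fun_add h2).fun_add h3
      convert h4 using 1
      push_cast
      ring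
    have hg0 : g 0 ≤ 0 := by
      have hz : g 0 = 0 := by
        apply Finset.sum_eq_zero
        intro i _
        obtain ⟨e1, e2, e3⟩ := h0cell i (rep (cell i)) (hrep (cell i)).symm
        rw [e1, e2, e3]
        ring
      rw [hz]
    set K : ℝ := 4 * β * (N:ℝ) * C + γ + δ + σ + 2 * β * C * (N:ℝ) with hKdef
    have hmain : ∀ t ∈ Set.Icc (0:ℝ) b, g' t ≤ K * g t := by
      intro t ht
      have hΦabs : ∀ i, |∑ j, β * w i j * I t j| ≤ β * (N:ℝ) * C := by
        intro i
        calc |∑ j, β * w i j * I t j| ≤ ∑ j, |β * w i j * I t j| :=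
              Finset.abs_sum_le_sum_abs _ _
          _ ≤ ∑ _j : Fin N, β * C := by
              refine Finset.sum_le_sum (fun j _ => ?_)
              rw [abs_mul, abs_mul, abs_of_nonneg hβ.le, abs_of_nonneg (hw0 i j)]
              have h5 : w i j * |I t j| ≤ 1 * C :=
                mul_le_mul (hw1 i j) (hC t ht j).2 (abs_nonneg _) zero_le_one
              calc β * w i j * |I t j| = β * (w i j * |I t j|) := by ring
                _ ≤ β * (1 * C) := mul_le_mul_of_nonneg_left h5 hβ.le
                _ = β * C := by ring
          _ = β * (N:ℝ) * C := by
              rw [Finset.sum_const, Finset.card_univ, Fintype.card_fin, nsmul_eq_mul]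
              ring
      -- the equitable-partition identity
      have hΦd : ∀ i : Fin N, (∑ j, β * w i j * I t j)
            - (∑ j, β * w (rep (cell i)) j * I t j)
          = ∑ j, (β * (w i j - w (rep (cell i)) j)) * (I t j - I t (rep (cell j))) := by
        intro i
        have h1 := stmt6_fiber a cell d hequit ε w hw (fun m => I t (rep m)) i
        have h2 := stmt6_fiber a cell d hequit ε w hw (fun m => I t (rep m)) (rep (cell i))
        rw [hrep (cell i)] at h2
        have h3 : ∑ j, w i j * I t (rep (cell j))
            = ∑ j, w (rep (cell i)) j * I t (rep (cell j)) := h1.trans h2.symm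
        have h4 : ∑ j, (β * (w i j - w (rep (cell i)) j)) * (I t j - I t (rep (cell j)))
            = ((∑ j, β * w i j * I t j) - (∑ j, β * w (rep (cell i)) j * I t j))
              - β * ((∑ j, w i j * I t (rep (cell j)))
                  - ∑ j, w (rep (cell i)) j * I t (rep (cell j))) := by
          simp only [← Finset.sum_sub_distrib, Finset.mul_sum]
          exact Finset.sum_congr rfl (fun j _ => by ring)
        rw [h3, sub_self, mul_zero, sub_zero] at h4
        exact h4.symm
      have hperi : ∀ i : Fin N,
          2 * (S t i - S t (rep (cell i))) *
            ((-(S t i) * (∑ j, β * w i j * I t j) + γ * R t i - σ * S t i)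
             - (-(S t (rep (cell i))) * (∑ j, β * w (rep (cell i)) j * I t j)
                + γ * R t (rep (cell i)) - σ * S t (rep (cell i))))
          + 2 * (I t i - I t (rep (cell i))) *
            ((S t i * (∑ j, β * w i j * I t j) - δ * I t i)
             - (S t (rep (cell i)) * (∑ j, β * w (rep (cell i)) j * I t j)
                - δ * I t (rep (cell i))))
          + 2 * (R t i - R t (rep (cell i))) *
            ((δ * I t i - γ * R t i + σ * S t i)
             - (δ * I t (rep (cell i)) - γ * R t (rep (cell i))
                + σ * S t (rep (cell i))))
          ≤ (4 * β * (N:ℝ) * C + γ + δ + σ)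
              * ((S t i - S t (rep (cell i))) ^ 2 + (I t i - I t (rep (cell i))) ^ 2
                 + (R t i - R t (rep (cell i))) ^ 2)
            + (2 * β * C) * ∑ j, (I t j - I t (rep (cell j))) ^ 2 := by
        intro i
        have habsΦ := hΦabs i
        have hd1 := hΦd i
        -- coefficient-bounded sums
        have hcoef : ∀ x : ℝ, |x| ≤ 2 → ∀ j, |β * (w i j - w (rep (cell i)) j) * x| ≤ β * C →
            True := fun _ _ _ _ => trivial
        have q2 : ∀ y : ℝ, |y| ≤ C → ∀ e : ℝ,
            (2 * e * y) * ((∑ j, β * w i j * I t j)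
              - (∑ j, β * w (rep (cell i)) j * I t j))
            ≤ β * C * (N:ℝ) * e ^ 2 + β * C * ∑ j, (I t j - I t (rep (cell j))) ^ 2 := by
          intro y hy e
          rw [hd1]
          have e2 : (2 * e * y) * (∑ j, (β * (w i j - w (rep (cell i)) j))
                * (I t j - I t (rep (cell j))))
              = ∑ j, (β * (w i j - w (rep (cell i)) j) * y)
                  * (2 * e * (I t j - I t (rep (cell j)))) := by
            rw [Finset.mul_sum]
            exact Finset.sum_congr rfl (fun j _ => by ring)
          rw [e2]
          calc ∑ j, (β * (w i j - w (rep (cell i)) j) * y)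
                  * (2 * e * (I t j - I t (rep (cell j))))
              ≤ ∑ j, (β * C) * (e ^ 2 + (I t j - I t (rep (cell j))) ^ 2) := by
                refine Finset.sum_le_sum (fun j _ => ?_)
                refine stmt6_mul_abs_le ?_ (stmt6_abs_two_mul e (I t j - I t (rep (cell j))))
                rw [abs_mul, abs_mul, abs_of_nonneg hβ.le]
                have hwd : |w i j - w (rep (cell i)) j| ≤ 1 := by
                  rw [abs_le]
                  constructor
                  · linarith [hw0 i j, hw1 (rep (cell i)) j]
                  · linarith [hw1 i j, hw0 (rep (cell i)) j]
                have h5 : |w i j - w (rep (cell i)) j| * |y| ≤ 1 * C :=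
                  mul_le_mul hwd hy (abs_nonneg _) zero_le_one
                calc β * |w i j - w (rep (cell i)) j| * |y|
                    = β * (|w i j - w (rep (cell i)) j| * |y|) := by ring
                  _ ≤ β * (1 * C) := mul_le_mul_of_nonneg_left h5 hβ.le
                  _ = β * C := by ring
            _ = β * C * (N:ℝ) * e ^ 2 + β * C * ∑ j, (I t j - I t (rep (cell j))) ^ 2 := by
                rw [← Finset.mul_sum, Finset.sum_add_distrib, Finset.sum_const,
                  Finset.card_univ, Fintype.card_fin, nsmul_eq_mul, Finset.mul_sum,
                  ← Finset.mul_sum]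
                ring
      
        have hSri : |S t (rep (cell i))| ≤ C := (hC t ht (rep (cell i))).1
        have q2S := q2 (S t (rep (cell i))) hSri (-(S t i - S t (rep (cell i))))
        have q2I := q2 (S t (rep (cell i))) hSri (I t i - I t (rep (cell i)))
        -- bound for the -Φ e² and Φ (2 e e') pieces
        have q1 : (-(∑ j, β * w i j * I t j)) * (2 * (S t i - S t (rep (cell i))) ^ 2)
            ≤ (β * (N:ℝ) * C) * (2 * (S t i - S t (rep (cell i))) ^ 2) := by
          have h1 : -(∑ j, β * w i j * I t j) ≤ β * (N:ℝ) * C :=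
            le_trans (neg_le_abs _) habsΦ
          have h2 : (0:ℝ) ≤ 2 * (S t i - S t (rep (cell i))) ^ 2 := by positivity
          exact mul_le_mul_of_nonneg_right h1 h2
        have r1 : (∑ j, β * w i j * I t j)
              * (2 * (I t i - I t (rep (cell i))) * (S t i - S t (rep (cell i))))
            ≤ (β * (N:ℝ) * C) * ((I t i - I t (rep (cell i))) ^ 2
                + (S t i - S t (rep (cell i))) ^ 2) :=
          stmt6_mul_abs_le habsΦ
            (stmt6_abs_two_mul (I t i - I t (rep (cell i))) (S t i - S t (rep (cell i))))
        have q3 : 2 * γ * (S t i - S t (rep (cell i))) * (R t i - R t (rep (cell i)))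
            ≤ γ * ((S t i - S t (rep (cell i))) ^ 2 + (R t i - R t (rep (cell i))) ^ 2) :=
          stmt6_two_mul_le hγ.le
        have r3 : 2 * δ * (R t i - R t (rep (cell i))) * (I t i - I t (rep (cell i)))
            ≤ δ * ((R t i - R t (rep (cell i))) ^ 2 + (I t i - I t (rep (cell i))) ^ 2) :=
          stmt6_two_mul_le hδ.le
        have r4 : 2 * σ * (R t i - R t (rep (cell i))) * (S t i - S t (rep (cell i)))
            ≤ σ * ((R t i - R t (rep (cell i))) ^ 2 + (S t i - S t (rep (cell i))) ^ 2) :=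
          stmt6_two_mul_le hσ
        have hσS : 0 ≤ σ * (2 * (S t i - S t (rep (cell i))) ^ 2) := by positivity
        have hδI : 0 ≤ δ * (2 * (I t i - I t (rep (cell i))) ^ 2) := by positivity
        have hγR : 0 ≤ γ * (2 * (R t i - R t (rep (cell i))) ^ 2) := by positivity
        -- algebraic decomposition of the left-hand side
        have edec :
            2 * (S t i - S t (rep (cell i))) *
              ((-(S t i) * (∑ j, β * w i j * I t j) + γ * R t i - σ * S t i)
               - (-(S t (rep (cell i))) * (∑ j, β * w (rep (cell i)) j * I t j)
                  + γ * R t (rep (cell i)) - σ * S t (rep (cell i))))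
            + 2 * (I t i - I t (rep (cell i))) *
              ((S t i * (∑ j, β * w i j * I t j) - δ * I t i)
               - (S t (rep (cell i)) * (∑ j, β * w (rep (cell i)) j * I t j)
                  - δ * I t (rep (cell i))))
            + 2 * (R t i - R t (rep (cell i))) *
              ((δ * I t i - γ * R t i + σ * S t i)
               - (δ * I t (rep (cell i)) - γ * R t (rep (cell i))
                  + σ * S t (rep (cell i))))
            = (-(∑ j, β * w i j * I t j)) * (2 * (S t i - S t (rep (cell i))) ^ 2)
              + (2 * (-(S t i - S t (rep (cell i)))) * (S t (rep (cell i))))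
                  * ((∑ j, β * w i j * I t j) - (∑ j, β * w (rep (cell i)) j * I t j))
              + 2 * γ * (S t i - S t (rep (cell i))) * (R t i - R t (rep (cell i)))
              - σ * (2 * (S t i - S t (rep (cell i))) ^ 2)
              + (∑ j, β * w i j * I t j)
                  * (2 * (I t i - I t (rep (cell i))) * (S t i - S t (rep (cell i))))
              + (2 * (I t i - I t (rep (cell i))) * (S t (rep (cell i))))
                  * ((∑ j, β * w i j * I t j) - (∑ j, β * w (rep (cell i)) j * I t j))
              - δ * (2 * (I t i - I t (rep (cell i))) ^ 2)
              + 2 * δ * (R t i - R t (rep (cell i))) * (I t i - I t (rep (cell i)))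
              - γ * (2 * (R t i - R t (rep (cell i))) ^ 2)
              + 2 * σ * (R t i - R t (rep (cell i))) * (S t i - S t (rep (cell i))) := by
          ring
        rw [edec]
        have s1 : 0 ≤ (β * (N:ℝ) * C) * (S t i - S t (rep (cell i))) ^ 2 := by positivity
        have s2 : 0 ≤ (β * (N:ℝ) * C) * (I t i - I t (rep (cell i))) ^ 2 := by positivity
        have s3 : 0 ≤ (β * (N:ℝ) * C) * (R t i - R t (rep (cell i))) ^ 2 := by positivity
        nlinarith [q1, q2S, q2I, q3, r1, r3, r4, hσS, hδI, hγR, s1, s2, s3]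
      show (∑ i,
          (2 * (S t i - S t (rep (cell i))) *
            ((-(S t i) * (∑ j, β * w i j * I t j) + γ * R t i - σ * S t i)
             - (-(S t (rep (cell i))) * (∑ j, β * w (rep (cell i)) j * I t j)
                + γ * R t (rep (cell i)) - σ * S t (rep (cell i))))
           + 2 * (I t i - I t (rep (cell i))) *
            ((S t i * (∑ j, β * w i j * I t j) - δ * I t i)
             - (S t (rep (cell i)) * (∑ j, β * w (rep (cell i)) j * I t j)
                - δ * I t (rep (cell i))))
           + 2 * (R t i - R t (rep (cell i))) *
            ((δ * I t i - γ * R t i + σ * S t i)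
             - (δ * I t (rep (cell i)) - γ * R t (rep (cell i))
                + σ * S t (rep (cell i)))))) ≤ K * g t
      calc (∑ i,
          (2 * (S t i - S t (rep (cell i))) *
            ((-(S t i) * (∑ j, β * w i j * I t j) + γ * R t i - σ * S t i)
             - (-(S t (rep (cell i))) * (∑ j, β * w (rep (cell i)) j * I t j)
                + γ * R t (rep (cell i)) - σ * S t (rep (cell i))))
           + 2 * (I t i - I t (rep (cell i))) *
            ((S t i * (∑ j, β * w i j * I t j) - δ * I t i)
             - (S t (rep (cell i)) * (∑ j, β * w (rep (cell i)) j * I t j)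
                - δ * I t (rep (cell i))))
           + 2 * (R t i - R t (rep (cell i))) *
            ((δ * I t i - γ * R t i + σ * S t i)
             - (δ * I t (rep (cell i)) - γ * R t (rep (cell i))
                + σ * S t (rep (cell i))))))
          ≤ ∑ i, ((4 * β * (N:ℝ) * C + γ + δ + σ)
              * ((S t i - S t (rep (cell i))) ^ 2 + (I t i - I t (rep (cell i))) ^ 2
                 + (R t i - R t (rep (cell i))) ^ 2)
            + (2 * β * C) * ∑ j, (I t j - I t (rep (cell j))) ^ 2) :=
            Finset.sum_le_sum (fun i _ => hperi i)
        _ = (4 * β * (N:ℝ) * C + γ + δ + σ) * g t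
            + (N:ℝ) * ((2 * β * C) * ∑ j, (I t j - I t (rep (cell j))) ^ 2) := by
            rw [Finset.sum_add_distrib, ← Finset.mul_sum, Finset.sum_const,
              Finset.card_univ, Fintype.card_fin, nsmul_eq_mul, hgdef]
        _ ≤ (4 * β * (N:ℝ) * C + γ + δ + σ) * g t + (N:ℝ) * ((2 * β * C) * g t) := by
            have h1 : ∑ j, (I t j - I t (rep (cell j))) ^ 2 ≤ g t := by
              rw [hgdef]
              exact Finset.sum_le_sum (fun j _ => by
                nlinarith [sq_nonneg (S t j - S t (rep (cell j))),
                  sq_nonneg (R t j - R t (rep (cell j)))])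
            have h2 : (2 * β * C) * ∑ j, (I t j - I t (rep (cell j))) ^ 2
                ≤ (2 * β * C) * g t :=
              mul_le_mul_of_nonneg_left h1 (by positivity)
            have h3 : (N:ℝ) * ((2 * β * C) * ∑ j, (I t j - I t (rep (cell j))) ^ 2)
                ≤ (N:ℝ) * ((2 * β * C) * g t) :=
              mul_le_mul_of_nonneg_left h2 (Nat.cast_nonneg N)
            linarith
        _ = K * g t := by rw [hKdef]; ring
    have hle := stmt6_gronwall_zero hd hg0 hmain
    intro t ht i
    have hgt := hle t ht
    have hterm : (S t i - S t (rep (cell i))) ^ 2 + (I t i - I t (rep (cell i))) ^ 2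
        + (R t i - R t (rep (cell i))) ^ 2 ≤ 0 := by
      have h1 : (S t i - S t (rep (cell i))) ^ 2 + (I t i - I t (rep (cell i))) ^ 2
          + (R t i - R t (rep (cell i))) ^ 2 ≤ g t :=
        Finset.single_le_sum
          (f := fun j => (S t j - S t (rep (cell j))) ^ 2 + (I t j - I t (rep (cell j))) ^ 2
            + (R t j - R t (rep (cell j))) ^ 2)
          (fun j _ => by positivity) (Finset.mem_univ i)
      linarith
    refine ⟨sub_eq_zero.1 ?_, sub_eq_zero.1 ?_, sub_eq_zero.1 ?_⟩ <;>
      nlinarith [sq_nonneg (S t i - S t (rep (cell i))), sq_nonneg (I t i - I t (rep (cell i))),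
        sq_nonneg (R t i - R t (rep (cell i)))]
  -- assembly
  refine ⟨?_, ?_⟩
  · intro t ht
    refine ⟨fun i => ⟨(key1 t t ⟨ht, le_rfl⟩ i).1, (key1 t t ⟨ht, le_rfl⟩ i).2.1,
      (key1 t t ⟨ht, le_rfl⟩ i).2.2, hsum t i⟩, fun i r hir => ?_⟩
    have h1 := key2 t t ⟨ht, le_rfl⟩ i
    have h2 := key2 t t ⟨ht, le_rfl⟩ r
    rw [hir] at h1
    exact ⟨h1.1.trans h2.1.symm, h1.2.1.trans h2.2.1.symm, h1.2.2.trans h2.2.2.symm⟩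
  · refine ⟨fun t h => S t (rep h), fun t h => I t (rep h), fun t h => R t (rep h),
      fun t ht i => key2 t t ⟨ht, le_rfl⟩ i, fun t ht h => ?_⟩
    -- the value of the interaction sum at the representative
    have hIb : ∀ j, I t j = I t (rep (cell j)) := fun j => (key2 t t ⟨ht, le_rfl⟩ j).2.1
    have hΦ : (∑ j, β * w (rep h) j * I t j)
        = β * ((∑ m ∈ Finset.univ.erase h, ε * d h m * I t (rep m))
            + d h h * I t (rep h)) := by
      have e1 : ∑ j, β * w (rep h) j * I t j
          = β * ∑ j, w (rep h) j * (fun m => I t (rep m)) (cell j) := by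
        rw [Finset.mul_sum]
        refine Finset.sum_congr rfl (fun j _ => ?_)
        simp only
        rw [← hIb j]; ring
      rw [e1, stmt6_fiber a cell d hequit ε w hw (fun m => I t (rep m)) (rep h)]
      simp only [hrep h]
      rw [← Finset.sum_erase_add Finset.univ _ (Finset.mem_univ h)]
      have e2 : ∑ m ∈ Finset.univ.erase h, (if h = m then 1 else ε) * d h m * I t (rep m)
          = ∑ m ∈ Finset.univ.erase h, ε * d h m * I t (rep m) := by
        refine Finset.sum_congr rfl (fun m hm => ?_)
        rw [if_neg (Ne.symm (Finset.ne_of_mem_erase hm))]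
      rw [e2]
      norm_num
    refine ⟨?_, ?_, ?_⟩
    · have hd := hS t (rep h)
      rw [hΦ] at hd
      convert hd using 1
      ring
    · have hd := hI t (rep h)
      rw [hΦ] at hd
      convert hd using 1
      ring
    · exact hR t (rep h)
end

section
/- For the SIRS_v mean-field model on a d_G-regular graph, any endemic equilibrium with equal components (S_i* = S*, I_i* = I* > 0, R_i* = R* for all i) satisfies S* = δ/(βd_G). Moreover, since I* < 1 − S*, the quantity (1/β)·(δI*/(S*)²)·(S*/(1 − S*)) is strictly less than d_G = λ₁(A); hence the sufficient global-stability condition λ₁(A) < (1/β)·min_i{δI_i*/(S_i*)²}·min_i{S_i*/(1 − S_i*)} is never satisfied on regular graphs. -/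
/-- on a `d_G`-regular graph, an equal-components endemic
equilibrium of the SIRS_v mean-field model satisfies `S* = δ/(βd_G)`, and
since `I* < 1 − S*`, the quantity `(1/β)(δI*/(S*)²)(S*/(1−S*))` is strictly
less than `d_G = λ₁(A)`; hence the sufficient global-stability condition
`λ₁(A) < (1/β)·minᵢ{δIᵢ*/(Sᵢ*)²}·minᵢ{Sᵢ*/(1−Sᵢ*)}` never holds on regular
graphs. -/
theorem stmt10 (β δ dG : ℝ) (hβ : 0 < β) (hδ : 0 < δ) (hdG : 0 < dG)
    (Sstar Istar Rstar : ℝ)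
    (hSdef : Sstar = 1 - Istar - Rstar)
    (heq : β * Sstar * dG * Istar - δ * Istar = 0)
    (hIpos : 0 < Istar) (hIlt : Istar < 1 - Sstar) :
    Sstar = δ / (β * dG) ∧
    (1 / β) * (δ * Istar / Sstar ^ 2) * (Sstar / (1 - Sstar)) < dG ∧
    ¬ (dG < (1 / β) * (δ * Istar / Sstar ^ 2) * (Sstar / (1 - Sstar))) := by
  have hfac : (β * Sstar * dG - δ) * Istar = 0 := by ring_nf; linarith [heq]
  have h0 : β * Sstar * dG - δ = 0 := by
    rcases mul_eq_zero.mp hfac with h | h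
    · exact h
    · exact absurd h (ne_of_gt hIpos)
  have hβd : β * dG ≠ 0 := by positivity
  have hS : Sstar = δ / (β * dG) := by
    field_simp
    linarith [h0]
  have hSpos : 0 < Sstar := by rw [hS]; positivity
  have h1S : 0 < 1 - Sstar := lt_trans hIpos hIlt
  have key : (1 / β) * (δ * Istar / Sstar ^ 2) * (Sstar / (1 - Sstar))
      = dG * (Istar / (1 - Sstar)) := by
    have hδeq : δ = β * Sstar * dG := by linarith
    rw [hδeq]
    field_simp
  have hlt : (1 / β) * (δ * Istar / Sstar ^ 2) * (Sstar / (1 - Sstar)) < dG := by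
    rw [key]
    have : Istar / (1 - Sstar) < 1 := (div_lt_one h1S).mpr hIlt
    calc dG * (Istar / (1 - Sstar)) < dG * 1 := by
          exact mul_lt_mul_of_pos_left this hdG
      _ = dG := mul_one dG
  exact ⟨hS, hlt, not_lt_of_gt hlt⟩
end

section
/- Consider the planar ODE dI/dt = βd_G(1 − I − R)I − δI, dR/dt = δI − γR + σ(1 − I − R) on the open triangle Γ̊' = {(I,R) : I > 0, R > 0, I + R < 1}, with β, d_G, δ, γ > 0, δ > σ ≥ 0, and suppose (I*, R*) ∈ Γ̊' is an equilibrium. Define V(I,R) = c(I − I* − I* ln(I/I*)) + ½(R − R*)² with c = (δ − σ)/(βd_G). Then along trajectories V' = −(δ − σ)(I − I*)² − (γ + σ)(R − R*)², so V is a strict Lyapunov function and the equilibrium (I*, R*) is globally asymptotically stable in Γ̊'. -/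
open Filter

private lemma fLower (x a : ℝ) (hx : 0 < x) (ha : 0 < a) :
    (Real.sqrt x - Real.sqrt a)^2 ≤ x - a - a * Real.log (x/a) := by
  have hxa : 0 < x / a := by positivity
  have h := Real.log_le_sub_one_of_pos (show (0:ℝ) < Real.sqrt (x/a) by positivity)
  have hlog : Real.log (x/a) = 2 * Real.log (Real.sqrt (x/a)) := by
    rw [Real.log_sqrt hxa.le]; ring
  have hs : Real.sqrt (x/a) = Real.sqrt x / Real.sqrt a := Real.sqrt_div' x ha.le
  have hsx : Real.sqrt x ^ 2 = x := Real.sq_sqrt hx.le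
  have hsa : Real.sqrt a ^ 2 = a := Real.sq_sqrt ha.le
  have hsa0 : 0 < Real.sqrt a := Real.sqrt_pos.mpr ha
  have hsx0 : 0 < Real.sqrt x := Real.sqrt_pos.mpr hx
  rw [hs] at h
  have hfs : a * (Real.sqrt x / Real.sqrt a) = Real.sqrt a * Real.sqrt x := by
    field_simp
    nlinarith [hsa]
  have h3 : a * Real.log (Real.sqrt (x/a)) ≤ Real.sqrt a * Real.sqrt x - a := by
    rw [hs]
    have := mul_le_mul_of_nonneg_left h ha.le
    nlinarith
  nlinarith [hlog]

private lemma fUpper (x a : ℝ) (hx : 0 < x) (ha : 0 < a) :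
    x - a - a * Real.log (x/a) ≤ (x-a)^2 / x := by
  have h := Real.log_le_sub_one_of_pos (show (0:ℝ) < a/x by positivity)
  have hl : Real.log (x/a) = - Real.log (a/x) := by
    rw [← Real.log_inv]; congr 1; field_simp
  rw [hl, le_div_iff₀ hx]
  have h2 : a*x*(a/x-1) = a*a - a*x := by field_simp
  nlinarith [mul_le_mul_of_nonneg_left h (le_of_lt (mul_pos ha hx))]

private lemma sqBound (u v : ℝ) (hu0 : 0 ≤ u) (hu1 : u ≤ 1) (hv0 : 0 ≤ v) (hv1 : v ≤ 1) :
    (u^2 - v^2)^2 ≤ 4 * (u - v)^2 := by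
  have h2 : (0:ℝ) ≤ 2 - (u + v) := by linarith
  have h3 : (0:ℝ) ≤ 2 + (u + v) := by linarith
  have key : 0 ≤ (u-v)^2 * ((2-(u+v))*(2+(u+v))) :=
    mul_nonneg (sq_nonneg _) (mul_nonneg h2 h3)
  nlinarith [key]

private lemma lyapTendsto (V D : ℝ → ℝ) (hVder : ∀ t, HasDerivAt V (D t) t)
    (hV0 : ∀ t, 0 ≤ V t) (hD : ∀ t, D t ≤ 0) (k : ℝ) (hk : 0 < k)
    (hkV : ∀ t, 0 ≤ t → V t ≤ V 0 → k * V t ≤ -D t) :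
    Tendsto V atTop (nhds 0) := by
  have hanti : Antitone V := antitone_of_hasDerivAt_nonpos hVder hD
  have hkV' : ∀ t, 0 ≤ t → k * V t ≤ -D t := fun t ht => hkV t ht (hanti ht)
  have hWder : ∀ t, HasDerivAt (fun s => Real.exp (k * s) * V s)
      (Real.exp (k * t) * k * V t + Real.exp (k * t) * D t) t := by
    intro t
    have h1 : HasDerivAt (fun s : ℝ => k * s) k t := by
      simpa using (hasDerivAt_id t).const_mul k
    have he : HasDerivAt (fun s : ℝ => Real.exp (k * s)) (Real.exp (k * t) * k) t := by
      exact (Real.hasDerivAt_exp (k * t)).comp t h1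
    exact he.mul (hVder t)
  have hWanti : AntitoneOn (fun s => Real.exp (k * s) * V s) (Set.Ici (0:ℝ)) := by
    apply antitoneOn_of_deriv_nonpos (convex_Ici 0)
    · exact fun x _ => ((hWder x).continuousAt).continuousWithinAt
    · exact fun x _ => ((hWder x).differentiableAt).differentiableWithinAt
    · intro x hx
      rw [interior_Ici] at hx
      rw [(hWder x).deriv]
      have h1 := hkV' x hx.le
      nlinarith [Real.exp_pos (k * x),
        mul_le_mul_of_nonneg_left (show D x ≤ -(k * V x) by linarith) (Real.exp_pos (k * x)).le]
  have hVexp : ∀ t, 0 ≤ t → V t ≤ Real.exp (-(k * t)) * V 0 := by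
    intro t ht
    have hWt : Real.exp (k * t) * V t ≤ Real.exp (k * 0) * V 0 :=
      hWanti Set.self_mem_Ici ht ht
    rw [mul_zero, Real.exp_zero, one_mul] at hWt
    calc V t = Real.exp (-(k * t)) * (Real.exp (k * t) * V t) := by
          rw [← mul_assoc, ← Real.exp_add]; simp
      _ ≤ Real.exp (-(k * t)) * V 0 :=
          mul_le_mul_of_nonneg_left hWt (Real.exp_pos _).le
  have hexp : Tendsto (fun t : ℝ => Real.exp (-(k * t)) * V 0) atTop (nhds 0) := by
    have hlin : Tendsto (fun t : ℝ => -(k * t)) atTop atBot := by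
      have h1 : Tendsto (fun t : ℝ => k * t) atTop atTop :=
        Tendsto.const_mul_atTop hk tendsto_id
      exact tendsto_neg_atBot_iff.mpr h1
    have h2 : Tendsto (fun t : ℝ => Real.exp (-(k * t))) atTop (nhds 0) :=
      Real.tendsto_exp_atBot.comp hlin
    simpa using h2.mul_const (V 0)
  apply squeeze_zero' (Eventually.of_forall hV0) _ hexp
  filter_upwards [eventually_ge_atTop (0:ℝ)] with t ht
  exact hVexp t ht

set_option maxHeartbeats 1000000 in
/-- for the planar SIRS ODE on the open triangle, the function
`V = c(I − I* − I* ln(I/I*)) + ½(R − R*)²` with `c = (δ−σ)/(βd_G)` satisfies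
`V' = −(δ−σ)(I−I*)² − (γ+σ)(R−R*)²` along trajectories, so it is a strict
Lyapunov function and the interior equilibrium `(I*, R*)` is globally
asymptotically stable in the open triangle. -/
theorem stmt11 (β dG δ γ σ : ℝ) (hβ : 0 < β) (hdG : 0 < dG) (hδ : 0 < δ)
    (hγ : 0 < γ) (hσ : 0 ≤ σ) (hσδ : σ < δ)
    (Ist Rst : ℝ)
    (hIstmem : 0 < Ist ∧ 0 < Rst ∧ Ist + Rst < 1)
    (heqI : β * dG * (1 - Ist - Rst) * Ist - δ * Ist = 0)
    (heqR : δ * Ist - γ * Rst + σ * (1 - Ist - Rst) = 0)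
    (I R : ℝ → ℝ)
    (hmem : ∀ t : ℝ, 0 < I t ∧ 0 < R t ∧ I t + R t < 1)
    (hI : ∀ t, HasDerivAt I (β * dG * (1 - I t - R t) * I t - δ * I t) t)
    (hR : ∀ t, HasDerivAt R (δ * I t - γ * R t + σ * (1 - I t - R t)) t) :
    (∀ t : ℝ,
      HasDerivAt (fun s => (δ - σ) / (β * dG) *
          (I s - Ist - Ist * Real.log (I s / Ist)) + (1 / 2) * (R s - Rst) ^ 2)
        (-(δ - σ) * (I t - Ist) ^ 2 - (γ + σ) * (R t - Rst) ^ 2) t) ∧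
    (∀ t : ℝ,
      -(δ - σ) * (I t - Ist) ^ 2 - (γ + σ) * (R t - Rst) ^ 2 ≤ 0 ∧
      (-(δ - σ) * (I t - Ist) ^ 2 - (γ + σ) * (R t - Rst) ^ 2 = 0 ↔
        I t = Ist ∧ R t = Rst)) ∧
    Tendsto I atTop (nhds Ist) ∧ Tendsto R atTop (nhds Rst) := by
  obtain ⟨hIst0, hRst0, hIRst⟩ := hIstmem
  have hδσ : 0 < δ - σ := sub_pos.mpr hσδ
  have hbd : (β : ℝ) * dG ≠ 0 := by positivity
  have hIstar : β * dG * (1 - Ist - Rst) = δ := by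
    have h' : (β * dG * (1 - Ist - Rst)) * Ist = δ * Ist := by linarith [heqI]
    exact mul_right_cancel₀ hIst0.ne' h'
  -- Part 1: derivative identity
  have hDV : ∀ t : ℝ,
      HasDerivAt (fun s => (δ - σ) / (β * dG) *
          (I s - Ist - Ist * Real.log (I s / Ist)) + (1 / 2) * (R s - Rst) ^ 2)
        (-(δ - σ) * (I t - Ist) ^ 2 - (γ + σ) * (R t - Rst) ^ 2) t := by
    intro t
    obtain ⟨hI0, hR0, hIR⟩ := hmem t
    have hlog : HasDerivAt (fun s => Real.log (I s / Ist))
        ((β * dG * (1 - I t - R t) * I t - δ * I t) / I t) t := by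
      have h1 : HasDerivAt (fun s => Real.log (I s) - Real.log Ist)
          ((β * dG * (1 - I t - R t) * I t - δ * I t) / I t) t :=
        ((hI t).log hI0.ne').sub_const _
      apply h1.congr_of_eventuallyEq
      filter_upwards with s
      rw [Real.log_div (hmem s).1.ne' hIst0.ne']
    have hV := ((((hI t).sub_const Ist).sub (hlog.const_mul Ist)).const_mul
        ((δ - σ)/(β * dG))).add ((((hR t).sub_const Rst).pow 2).const_mul ((1:ℝ)/2))
    convert hV using 1
    · rfl
    · rfl
    · rfl
    have hq2 : β * dG * (1 - I t - R t) * I t - δ * I t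
          - Ist * ((β * dG * (1 - I t - R t) * I t - δ * I t) / I t)
        = -(β * dG) * (I t - Ist) * ((I t - Ist) + (R t - Rst)) := by
      have hE : β * dG * (1 - I t - R t) * I t - δ * I t
          = -(β * dG) * I t * ((I t - Ist) + (R t - Rst)) := by
        rw [← hIstar]; ring
      rw [hE]; field_simp; ring
    rw [hq2]
    field_simp
    linear_combination (2 * (R t - Rst) * (β * dG)) * heqR
      + (4 * (Rst - R t) * (β * dG)) * heqR + (2 * (R t - Rst) * (β * dG - 1)) * heqR
  -- Part 2: sign condition
  have hsign : ∀ t : ℝ,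
      -(δ - σ) * (I t - Ist) ^ 2 - (γ + σ) * (R t - Rst) ^ 2 ≤ 0 := by
    intro t
    nlinarith [sq_nonneg (I t - Ist), sq_nonneg (R t - Rst)]
  refine ⟨hDV, ?_, ?_⟩
  · intro t
    refine ⟨hsign t, ?_, ?_⟩
    · intro h
      have h1 : (I t - Ist)^2 = 0 := by
        nlinarith [sq_nonneg (I t - Ist), sq_nonneg (R t - Rst)]
      have h2 : (R t - Rst)^2 = 0 := by
        nlinarith [sq_nonneg (I t - Ist), sq_nonneg (R t - Rst)]
      constructor
      · have := pow_eq_zero_iff (n := 2) (by norm_num) |>.mp h1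
        linarith [this]
      · have := pow_eq_zero_iff (n := 2) (by norm_num) |>.mp h2
        linarith [this]
    · rintro ⟨h1, h2⟩
      rw [h1, h2]; ring
  -- Part 3: convergence
  set c : ℝ := (δ - σ) / (β * dG) with hcdef
  have hc : 0 < c := div_pos hδσ (by positivity)
  have hF0 : ∀ t, 0 ≤ I t - Ist - Ist * Real.log (I t / Ist) := by
    intro t
    nlinarith [fLower (I t) Ist (hmem t).1 hIst0,
      sq_nonneg (Real.sqrt (I t) - Real.sqrt Ist)]
  have hV0 : ∀ t, 0 ≤ c * (I t - Ist - Ist * Real.log (I t / Ist))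
      + (1 / 2) * (R t - Rst) ^ 2 := by
    intro t
    nlinarith [mul_nonneg hc.le (hF0 t), sq_nonneg (R t - Rst)]
  set M : ℝ := (c * (I 0 - Ist - Ist * Real.log (I 0 / Ist))
      + (1 / 2) * (R 0 - Rst) ^ 2) / c with hMdef
  have hM0 : 0 ≤ M := div_nonneg (hV0 0) hc.le
  set ε : ℝ := Ist * Real.exp (-(M + 1 + Ist) / Ist) with hεdef
  have hε : 0 < ε := by positivity
  set k : ℝ := min ((δ - σ) * ε / c) (2 * (γ + σ)) with hkdef
  have hk : 0 < k := lt_min (by positivity) (by positivity)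
  -- key pointwise inequality
  have hkV : ∀ t, 0 ≤ t →
      (c * (I t - Ist - Ist * Real.log (I t / Ist)) + (1 / 2) * (R t - Rst) ^ 2
        ≤ c * (I 0 - Ist - Ist * Real.log (I 0 / Ist)) + (1 / 2) * (R 0 - Rst) ^ 2) →
      k * (c * (I t - Ist - Ist * Real.log (I t / Ist)) + (1 / 2) * (R t - Rst) ^ 2)
        ≤ -(-(δ - σ) * (I t - Ist) ^ 2 - (γ + σ) * (R t - Rst) ^ 2) := by
    intro t ht hVle
    have hIpos := (hmem t).1
    -- first: F t ≤ M
    have hFM : I t - Ist - Ist * Real.log (I t / Ist) ≤ M := by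
      rw [hMdef, le_div_iff₀ hc]
      nlinarith [sq_nonneg (R t - Rst)]
    -- lower bound ε ≤ I t
    have hIlb : ε ≤ I t := by
      by_contra hcon
      push_neg at hcon
      have hlogIt : Real.log (I t) ≤ Real.log ε := Real.log_le_log hIpos hcon.le
      have hlogε : Real.log ε = Real.log Ist + (-(M + 1 + Ist) / Ist) := by
        rw [hεdef, Real.log_mul hIst0.ne' (Real.exp_ne_zero _), Real.log_exp]
      have hfrac : Ist * (-(M + 1 + Ist) / Ist) = -(M + 1 + Ist) := by
        field_simp
      have hFt : Real.log (I t / Ist) = Real.log (I t) - Real.log Ist :=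
        Real.log_div hIpos.ne' hIst0.ne'
      have hmul : Ist * Real.log (I t) ≤ Ist * Real.log ε :=
        mul_le_mul_of_nonneg_left hlogIt hIst0.le
      have hbig : M + 1 ≤ I t - Ist - Ist * Real.log (I t / Ist) := by
        rw [hFt]
        nlinarith [hmul, hlogε, hfrac]
      linarith [hFM]
    -- quadratic upper bound on F
    have hup := fUpper (I t) Ist hIpos hIst0
    have h1 : I t - Ist - Ist * Real.log (I t / Ist) ≤ (I t - Ist) ^ 2 / ε :=
      le_trans hup (div_le_div_of_nonneg_left (sq_nonneg _) hε hIlb)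
    rw [le_div_iff₀ hε] at h1
    have hkc : k * c ≤ (δ - σ) * ε := by
      have hmin := min_le_left ((δ - σ) * ε / c) (2 * (γ + σ))
      calc k * c ≤ ((δ - σ) * ε / c) * c := by
            rw [hkdef]; exact mul_le_mul_of_nonneg_right hmin hc.le
        _ = (δ - σ) * ε := by field_simp
    have hk2 : k ≤ 2 * (γ + σ) := by rw [hkdef]; exact min_le_right _ _
    have hA : k * (c * (I t - Ist - Ist * Real.log (I t / Ist)))
        ≤ (δ - σ) * ε * (I t - Ist - Ist * Real.log (I t / Ist)) := by
      nlinarith [mul_le_mul_of_nonneg_right hkc (hF0 t)]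
    have hB : (δ - σ) * ((I t - Ist - Ist * Real.log (I t / Ist)) * ε)
        ≤ (δ - σ) * (I t - Ist) ^ 2 :=
      mul_le_mul_of_nonneg_left h1 hδσ.le
    have hC : k * ((R t - Rst) ^ 2) ≤ 2 * (γ + σ) * (R t - Rst) ^ 2 :=
      mul_le_mul_of_nonneg_right hk2 (sq_nonneg _)
    nlinarith [hA, hB, hC]
  have hVto0 : Tendsto (fun s => c * (I s - Ist - Ist * Real.log (I s / Ist))
      + (1 / 2) * (R s - Rst) ^ 2) atTop (nhds 0) :=
    lyapTendsto _ (fun t => -(δ - σ) * (I t - Ist) ^ 2 - (γ + σ) * (R t - Rst) ^ 2)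
      hDV hV0 hsign k hk hkV
  -- conclude convergence of I and R
  have hI2 : Tendsto (fun t => (I t - Ist) ^ 2) atTop (nhds 0) := by
    have hbound : ∀ t, (I t - Ist) ^ 2 ≤ (4 / c) *
        (c * (I t - Ist - Ist * Real.log (I t / Ist)) + (1 / 2) * (R t - Rst) ^ 2) := by
      intro t
      have hIpos := (hmem t).1
      have hI1 : I t ≤ 1 := by linarith [(hmem t).2.1, (hmem t).2.2]
      have hIst1 : Ist ≤ 1 := by linarith
      have hsx : Real.sqrt (I t) ^ 2 = I t := Real.sq_sqrt hIpos.le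
      have hsa : Real.sqrt Ist ^ 2 = Ist := Real.sq_sqrt hIst0.le
      have hsq := sqBound (Real.sqrt (I t)) (Real.sqrt Ist)
        (Real.sqrt_nonneg _) (Real.sqrt_le_one.mpr hI1) (Real.sqrt_nonneg _)
        (Real.sqrt_le_one.mpr hIst1)
      rw [hsx, hsa] at hsq
      have hlow := fLower (I t) Ist hIpos hIst0
      have h4F : (I t - Ist) ^ 2 ≤ 4 * (I t - Ist - Ist * Real.log (I t / Ist)) := by
        nlinarith [hsq, hlow]
      rw [div_mul_eq_mul_div, le_div_iff₀ hc]
      nlinarith [mul_le_mul_of_nonneg_right h4F hc.le, sq_nonneg (R t - Rst)]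
    have h4V : Tendsto (fun t => (4 / c) *
        (c * (I t - Ist - Ist * Real.log (I t / Ist)) + (1 / 2) * (R t - Rst) ^ 2))
        atTop (nhds 0) := by
      simpa using hVto0.const_mul (4 / c)
    exact squeeze_zero' (Eventually.of_forall fun t => sq_nonneg _)
      (Eventually.of_forall hbound) h4V
  have hR2 : Tendsto (fun t => (R t - Rst) ^ 2) atTop (nhds 0) := by
    have hbound : ∀ t, (R t - Rst) ^ 2 ≤ 2 *
        (c * (I t - Ist - Ist * Real.log (I t / Ist)) + (1 / 2) * (R t - Rst) ^ 2) := by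
      intro t
      nlinarith [mul_nonneg hc.le (hF0 t)]
    have h2V : Tendsto (fun t => 2 *
        (c * (I t - Ist - Ist * Real.log (I t / Ist)) + (1 / 2) * (R t - Rst) ^ 2))
        atTop (nhds 0) := by
      simpa using hVto0.const_mul 2
    exact squeeze_zero' (Eventually.of_forall fun t => sq_nonneg _)
      (Eventually.of_forall hbound) h2V
  constructor
  · rw [tendsto_iff_dist_tendsto_zero]
    have h := (Real.continuous_sqrt.tendsto 0).comp hI2
    simpa [Function.comp_def, Real.sqrt_sq_eq_abs, Real.dist_eq] using h
  · rw [tendsto_iff_dist_tendsto_zero]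
    have h := (Real.continuous_sqrt.tendsto 0).comp hR2
    simpa [Function.comp_def, Real.sqrt_sq_eq_abs, Real.dist_eq] using h
end
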